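/- Let n ≥ 1 and let X be a path-connected topological space with basepoint x_0. Then X is semilocally π_n-trivial if and only if there exists an open cover 𝒰 of X such that the n-th Spanier group π_n^{Sp}(𝒰,x_0) is the trivial subgroup of π_n(X,x_0). -/

import Mathlib

open Set Topology unitInterval ContinuousMap

noncomputable section

/-- `𝒰` is an open cover of `X`. -/
def IsOpenCover {X : Type*} [TopologicalSpace X] (𝒰 : Set (Set X)) : Prop :=
  (∀ U ∈ 𝒰, IsOpen U) ∧ ⋃₀ 𝒰 = univ

variable {X : Type*} [TopologicalSpace X]

/-- A continuous map `I^N → X` which, when regarded as a map on the `N`-sphere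
(i.e. a cube map constant on the boundary), is freely homotopic---through maps
constant on the boundary---to a map whose image is contained in some member of `𝒰`. -/
def FreelySmall {N : Type*} (𝒰 : Set (Set X)) (p : C((N → I), X)) : Prop :=
  ∃ (q : C((N → I), X)) (U : Set X) (H : ContinuousMap.Homotopy p q),
    U ∈ 𝒰 ∧ range q ⊆ U ∧
      ∀ t : I, ∀ y ∈ Cube.boundary N, ∀ z ∈ Cube.boundary N, H (t, y) = H (t, z)

/-- The `(n+1)`-st Spanier group of `(X,x₀)` with respect to the cover `𝒰`:
the subgroup of `π_{n+1}(X,x₀)` generated by classes of based maps which are freely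
homotopic (as sphere maps) into some member of `𝒰`. -/
def spanierGroup (n : ℕ) (𝒰 : Set (Set X)) (x₀ : X) : Subgroup (π_ (n + 1) X x₀) :=
  Subgroup.closure {γ | ∃ f : GenLoop (Fin (n + 1)) X x₀, FreelySmall 𝒰 f.1 ∧ γ = ⟦f⟧}

/-- The absolute `(n+1)`-st Spanier group of `(X,x₀)`: the intersection of the
Spanier groups over all open covers of `X`. -/
def spanierGroupAbs (n : ℕ) (x₀ : X) : Subgroup (π_ (n + 1) X x₀) :=
  ⨅ (𝒰 : Set (Set X)) (_ : IsOpenCover 𝒰), spanierGroup n 𝒰 x₀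

/-- The unit `k`-sphere, as a subset of `ℝ^{k+1}`. -/
abbrev unitSphere (k : ℕ) : Set (EuclideanSpace ℝ (Fin (k + 1))) := Metric.sphere 0 1

/-- `X` is semilocally `π_n`-trivial: every point has a neighborhood `U` such that any
continuous map `S^n → U` is null-homotopic in `X`. -/
def SemilocallyPiTrivial (n : ℕ) (X : Type*) [TopologicalSpace X] : Prop :=
  ∀ x : X, ∃ U : Set X, IsOpen U ∧ x ∈ U ∧
    ∀ f : C(unitSphere n, X), range f ⊆ U →
      ∃ c : X, ContinuousMap.Homotopic f (ContinuousMap.const _ c)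


/-! A map `I^{n+1} → X` constant on `∂I^{n+1}` is the same as a map `S^{n+1} → X`, because
`Cube.toSphere`, which collapses the boundary to the north pole, is a quotient map.

The geometric input is a collar construction: shrink the cube radially and fill the collar
around it with a path. Applied with the track of the boundary under a free homotopy `f ≃ const`
through maps constant on the boundary, it gives a homotopy rel boundary from `f` to a map that
runs along the track and then contracts, so `f` is trivial in `π_{n+1}`. Applied with a path
from `x₀`, it turns a sphere map into a based map freely homotopic to it, so a small sphere map
gives a generator of the Spanier group. -/

namespace Cube

variable {N : Type*}

def toCentered (y : I^N) : N → ℝ := fun i => 2 * (y i : ℝ) - 1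

def ofCentered (v : N → ℝ) : I^N := fun i => projIcc 0 1 zero_le_one ((v i + 1) / 2)

def stretch (s : ℝ) (y : I^N) : I^N := ofCentered (s⁻¹ • toCentered y)

@[fun_prop]
lemma continuous_toCentered : Continuous (toCentered (N := N)) := by
  unfold toCentered; fun_prop

@[fun_prop]
lemma continuous_ofCentered : Continuous (ofCentered (N := N)) :=
  continuous_pi fun _ => continuous_projIcc.comp (by fun_prop)

lemma continuous_stretch {Z : Type*} [TopologicalSpace Z] {s : Z → ℝ} {g : Z → I^N}
    (hs : Continuous s) (hs₀ : ∀ z, s z ≠ 0) (hg : Continuous g) :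
    Continuous fun z => stretch (s z) (g z) :=
  continuous_ofCentered.comp ((hs.inv₀ hs₀).smul (continuous_toCentered.comp hg))

lemma ofCentered_toCentered (y : I^N) : ofCentered (toCentered y) = y := by
  funext i
  simp [ofCentered, toCentered]

lemma stretch_one (y : I^N) : stretch 1 y = y := by
  rw [stretch, inv_one, one_smul, ofCentered_toCentered]

lemma abs_toCentered_le_one (y : I^N) (i : N) : |toCentered y i| ≤ 1 := by
  simp only [toCentered, abs_le]
  constructor <;> linarith [(y i).2.1, (y i).2.2]

lemma abs_toCentered_eq_one_iff {y : I^N} {i : N} :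
    |toCentered y i| = 1 ↔ y i = 0 ∨ y i = 1 := by
  rw [abs_eq zero_le_one, toCentered, Subtype.ext_iff, Subtype.ext_iff, Icc.coe_zero,
    Icc.coe_one]
  constructor <;> rintro (h | h)
  exacts [Or.inr (by linarith), Or.inl (by linarith), Or.inr (by rw [h]; norm_num),
    Or.inl (by rw [h]; norm_num)]

variable [Fintype N]

def supRadius (y : I^N) : ℝ := ‖toCentered y‖

@[fun_prop]
lemma continuous_supRadius : Continuous (supRadius (N := N)) :=
  continuous_toCentered.norm

lemma toCentered_ofCentered {v : N → ℝ} (hv : ‖v‖ ≤ 1) : toCentered (ofCentered v) = v := by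
  funext i
  have hi := abs_le.1 ((Real.norm_eq_abs _ ▸ norm_le_pi_norm v i).trans hv)
  simp only [toCentered, ofCentered]
  rw [projIcc_of_mem _ ⟨by linarith, by linarith⟩]
  ring

lemma supRadius_le_one (y : I^N) : supRadius y ≤ 1 :=
  (pi_norm_le_iff_of_nonneg zero_le_one).2 fun i => abs_toCentered_le_one y i

lemma supRadius_eq_one_iff {y : I^N} : supRadius y = 1 ↔ y ∈ boundary N := by
  constructor
  · intro h
    by_contra hy
    have hlt (i : N) : ‖toCentered y i‖ < 1 :=
      (abs_toCentered_le_one y i).lt_of_ne fun hi => hy ⟨i, abs_toCentered_eq_one_iff.1 hi⟩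
    exact ((pi_norm_lt_iff zero_lt_one).2 hlt).ne h
  · rintro ⟨i, hi⟩
    exact (supRadius_le_one y).antisymm
      ((abs_toCentered_eq_one_iff.2 hi).ge.trans (norm_le_pi_norm (toCentered y) i))

lemma supRadius_stretch {s : ℝ} (hs : 0 < s) {y : I^N} (h : supRadius y ≤ s) :
    supRadius (stretch s y) = supRadius y / s := by
  have hnorm : ‖s⁻¹ • toCentered y‖ = supRadius y / s := by
    rw [norm_smul, norm_inv, Real.norm_of_nonneg hs.le, inv_mul_eq_div, supRadius]
  rw [supRadius, stretch, toCentered_ofCentered (hnorm.le.trans ((div_le_one hs).2 h)), hnorm]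

lemma stretch_mem_boundary {s : ℝ} (hs : 0 < s) {y : I^N} (h : supRadius y = s) :
    stretch s y ∈ boundary N := by
  rw [← supRadius_eq_one_iff, supRadius_stretch hs h.le, h, div_self hs.ne']

end Cube

namespace ContinuousMap.Homotopy

variable {N : Type*} {f₀ f₁ f₂ : C(I^N, X)}

/-- A free homotopy of the sphere maps represented by `f₀` and `f₁`. -/
def ConstOnBoundary (F : Homotopy f₀ f₁) : Prop :=
  ∀ t, ∀ y ∈ Cube.boundary N, ∀ z ∈ Cube.boundary N, F (t, y) = F (t, z)

lemma ConstOnBoundary.symm {F : Homotopy f₀ f₁} (hF : F.ConstOnBoundary) :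
    F.symm.ConstOnBoundary :=
  fun t => hF (σ t)

lemma ConstOnBoundary.trans {F : Homotopy f₀ f₁} {G : Homotopy f₁ f₂}
    (hF : F.ConstOnBoundary) (hG : G.ConstOnBoundary) : (F.trans G).ConstOnBoundary := by
  intro t y hy z hz
  simp only [trans_apply]
  split_ifs
  exacts [hF _ y hy z hz, hG _ y hy z hz]

lemma _root_.ContinuousMap.HomotopyRel.constOnBoundary {x : X} {p q : GenLoop N X x}
    (G : p.1.HomotopyRel q.1 (Cube.boundary N)) : G.toHomotopy.ConstOnBoundary :=
  fun t y hy z hz => ((G.eq_fst t hy).trans (GenLoop.boundary p y hy)).trans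
    ((G.eq_fst t hz).trans (GenLoop.boundary p z hz)).symm

end ContinuousMap.Homotopy

namespace Cube

section Collar

variable {N : Type*} [Fintype N] {f₀ f₁ : C(I^N, X)} (F : Homotopy f₀ f₁) (δ : C(I × I, X))
  (h : ∀ t, ∀ y ∈ boundary N, F (t, y) = δ (t, t))

/-- At time `t`, this is `F t` on the cube shrunk to sup-radius `1 - t / 2`, and `δ (t, u)` on
the collar around it, where `u = 2 - 2 * supRadius` falls from `t` on the inner edge to `0` on
`∂I^N`. -/
def collarMap : C(I × I^N, X) where
  toFun p := if (p.1 : ℝ) ≤ 2 - 2 * supRadius p.2 then F (p.1, stretch (1 - p.1 / 2) p.2)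
    else δ (p.1, projIcc 0 1 zero_le_one (2 - 2 * supRadius p.2))
  continuous_toFun := by
    have hpos (t : I) : 0 < 1 - (t : ℝ) / 2 := by linarith [t.2.2]
    refine continuous_if_le (by fun_prop) (by fun_prop) ?_ ?_ ?_
    · exact (F.continuous.comp (continuous_fst.prodMk (continuous_stretch (by fun_prop)
        (fun p : I × I^N => (hpos p.1).ne') continuous_snd))).continuousOn
    · exact (δ.continuous.comp (continuous_fst.prodMk
        (continuous_projIcc.comp (by fun_prop)))).continuousOn
    · rintro ⟨t, y⟩ (hty : (t : ℝ) = 2 - 2 * supRadius y)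
      have hy : supRadius y = 1 - (t : ℝ) / 2 := by linarith
      dsimp only
      rw [h t _ (stretch_mem_boundary (hpos t) hy), ← hty, projIcc_val]

lemma collarMap_zero (y : I^N) : collarMap F δ h (0, y) = f₀ y := by
  have := supRadius_le_one y
  simp only [collarMap, ContinuousMap.coe_mk, Icc.coe_zero, zero_div, sub_zero]
  rw [if_pos (by linarith), stretch_one]
  exact F.apply_zero y

lemma collarMap_of_mem_boundary (t : I) {y : I^N} (hy : y ∈ boundary N) :
    collarMap F δ h (t, y) = δ (t, 0) := by
  simp only [collarMap, ContinuousMap.coe_mk, supRadius_eq_one_iff.2 hy]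
  split_ifs with ht
  · obtain rfl : t = 0 := le_antisymm (by norm_num at ht; exact ht) t.2.1
    norm_num [stretch_one, h 0 y hy]
  · norm_num [projIcc_left]

def collarHomotopy : Homotopy f₀ ((collarMap F δ h).curry 1) where
  toContinuousMap := collarMap F δ h
  map_zero_left := collarMap_zero F δ h
  map_one_left _ := rfl

lemma collarHomotopy_constOnBoundary : (collarHomotopy F δ h).ConstOnBoundary :=
  fun t _ hy _ hz =>
    (collarMap_of_mem_boundary F δ h t hy).trans (collarMap_of_mem_boundary F δ h t hz).symm

end Collar

variable {N : Type*} [Fintype N]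

def pathCollar {x₀ c : X} (γ : Path x₀ c) : C(I^N, X) :=
  ⟨fun y => γ.extend (2 - 2 * supRadius y), γ.continuous_extend.comp (by fun_prop)⟩

lemma pathCollar_homotopicRel_const {x₀ c : X} (γ : Path x₀ c) :
    (pathCollar (N := N) γ).HomotopicRel (ContinuousMap.const _ x₀) (boundary N) :=
  ⟨{ toFun := fun p => γ.extend ((1 - p.1) * (2 - 2 * supRadius p.2))
     continuous_toFun := γ.continuous_extend.comp (by fun_prop)
     map_zero_left := by simp [pathCollar]
     map_one_left := by simp
     prop' := fun t y hy => by simp [pathCollar, supRadius_eq_one_iff.2 hy] }⟩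

theorem genLoop_homotopic_const_of_constOnBoundary [Nonempty N] {x₀ c : X}
    {p : GenLoop N X x₀} (H : Homotopy p.1 (ContinuousMap.const _ c))
    (hH : H.ConstOnBoundary) : GenLoop.Homotopic p GenLoop.const := by
  let b : I^N := fun _ => 0
  have hb : b ∈ boundary N := ⟨Classical.arbitrary N, Or.inl rfl⟩
  let γ : Path x₀ c :=
    { toFun := fun t => H (t, b)
      source' := by simp [GenLoop.boundary p b hb]
      target' := by simp }
  have hγ (t : I) (y : I^N) (hy : y ∈ boundary N) :
      H (t, y) = (γ.toContinuousMap.comp ContinuousMap.snd) (t, t) :=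
    hH t y hy b hb
  have h_end : (collarMap H _ hγ).curry 1 = pathCollar γ := by
    ext y
    simp only [ContinuousMap.curry_apply, collarMap, pathCollar, ContinuousMap.coe_mk]
    split_ifs with h1
    · simpa using (γ.extend_of_one_le h1).symm
    · rfl
  refine ContinuousMap.HomotopicRel.trans
    ⟨⟨collarHomotopy H _ hγ, fun t y hy => ?_⟩⟩ (h_end ▸ pathCollar_homotopicRel_const γ)
  change collarMap H _ hγ (t, y) = p y
  simp [collarMap_of_mem_boundary H _ hγ t hy, GenLoop.boundary p y hy]

theorem exists_genLoop_homotopy_constOnBoundary {x₀ c : X} (g : C(I^N, X))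
    (hg : ∀ y ∈ boundary N, g y = c) (α : Path x₀ c) :
    ∃ (p : GenLoop N X x₀) (H : Homotopy g p.1), H.ConstOnBoundary := by
  let δ : C(I × I, X) :=
    ⟨fun q => α.extend (1 - q.1 + q.2), α.continuous_extend.comp (by fun_prop)⟩
  have hδ (t : I) (y : I^N) (hy : y ∈ boundary N) :
      ContinuousMap.Homotopy.refl g (t, y) = δ (t, t) := by
    simp [δ, hg y hy]
  refine ⟨⟨(collarMap _ δ hδ).curry 1, fun y hy => ?_⟩, collarHomotopy _ δ hδ,
    collarHomotopy_constOnBoundary _ δ hδ⟩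
  simp [collarMap_of_mem_boundary _ δ hδ 1 hy, δ]

end Cube

section Stereographic

variable {m : ℕ}

/-- The inverse stereographic projection of `a⁻¹ • v` from the north pole, written homogeneously
in `(a, v)`, so that `a = 0` gives the north pole. -/
def stereoPoint (a : ℝ) (v : Fin m → ℝ) : EuclideanSpace ℝ (Fin (m + 1)) :=
  WithLp.toLp 2 (Fin.snoc (fun i => 2 * a * v i / (∑ j, v j ^ 2 + a ^ 2))
    ((∑ j, v j ^ 2 - a ^ 2) / (∑ j, v j ^ 2 + a ^ 2)))

@[simp] lemma stereoPoint_castSucc (a : ℝ) (v : Fin m → ℝ) (i : Fin m) :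
    stereoPoint a v i.castSucc = 2 * a * v i / (∑ j, v j ^ 2 + a ^ 2) := by
  simp [stereoPoint]

@[simp] lemma stereoPoint_last (a : ℝ) (v : Fin m → ℝ) :
    stereoPoint a v (Fin.last m) = (∑ j, v j ^ 2 - a ^ 2) / (∑ j, v j ^ 2 + a ^ 2) := by
  simp [stereoPoint]

lemma norm_stereoPoint {a : ℝ} {v : Fin m → ℝ} (h : 0 < ∑ j, v j ^ 2 + a ^ 2) :
    ‖stereoPoint a v‖ = 1 := by
  rw [← pow_eq_one_iff_of_nonneg (norm_nonneg _) two_ne_zero, EuclideanSpace.real_norm_sq_eq,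
    Fin.sum_univ_castSucc]
  simp only [stereoPoint_castSucc, stereoPoint_last, div_pow, mul_pow, ← Finset.sum_div,
    ← Finset.mul_sum]
  field_simp
  ring

lemma stereoPoint_smul {k : ℝ} (hk : k ≠ 0) (a : ℝ) (v : Fin m → ℝ) :
    stereoPoint (k * a) (k • v) = stereoPoint a v := by
  have hk2 : k ^ 2 ≠ 0 := pow_ne_zero 2 hk
  have hadd : ∑ j, (k • v) j ^ 2 + (k * a) ^ 2 = k ^ 2 * (∑ j, v j ^ 2 + a ^ 2) := by
    simp only [Pi.smul_apply, smul_eq_mul, mul_pow, ← Finset.mul_sum]; ring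
  have hsub : ∑ j, (k • v) j ^ 2 - (k * a) ^ 2 = k ^ 2 * (∑ j, v j ^ 2 - a ^ 2) := by
    simp only [Pi.smul_apply, smul_eq_mul, mul_pow, ← Finset.mul_sum]; ring
  ext i
  induction i using Fin.lastCases with
  | last => rw [stereoPoint_last, stereoPoint_last, hadd, hsub, mul_div_mul_left _ _ hk2]
  | cast i =>
    rw [stereoPoint_castSucc, stereoPoint_castSucc, hadd, Pi.smul_apply, smul_eq_mul,
      show 2 * (k * a) * (k * v i) = k ^ 2 * (2 * a * v i) by ring, mul_div_mul_left _ _ hk2]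

lemma stereoPoint_one_sub_last {z : EuclideanSpace ℝ (Fin (m + 1))} (hz : ‖z‖ = 1)
    (hc : z (Fin.last m) ≠ 1) :
    stereoPoint (1 - z (Fin.last m)) (fun i => z i.castSucc) = z := by
  have hsq := EuclideanSpace.real_norm_sq_eq z
  rw [hz, Fin.sum_univ_castSucc] at hsq
  have hD : ∑ j : Fin m, z j.castSucc ^ 2 + (1 - z (Fin.last m)) ^ 2 =
      2 * (1 - z (Fin.last m)) := by
    linear_combination -hsq
  have hc' : 1 - z (Fin.last m) ≠ 0 := sub_ne_zero.2 hc.symm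
  ext i
  induction i using Fin.lastCases with
  | last =>
    rw [stereoPoint_last, hD]
    field_simp
    linear_combination -hsq
  | cast i =>
    rw [stereoPoint_castSucc, hD]
    field_simp

lemma stereoPoint_zero_left {v : Fin m → ℝ} (hv : v ≠ 0) :
    stereoPoint 0 v = EuclideanSpace.single (Fin.last m) 1 := by
  obtain ⟨j, hj⟩ := Function.ne_iff.1 hv
  have hS : 0 < ∑ j, v j ^ 2 := (sq_pos_of_ne_zero hj).trans_le
    (Finset.single_le_sum (fun j _ => sq_nonneg (v j)) (Finset.mem_univ j))
  ext i
  induction i using Fin.lastCases with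
  | last => simp [hS.ne']
  | cast i => simp [Fin.castSucc_ne_last]

lemma stereoPoint_last_eq_one_iff {a : ℝ} {v : Fin m → ℝ} (h : 0 < ∑ j, v j ^ 2 + a ^ 2) :
    stereoPoint a v (Fin.last m) = 1 ↔ a = 0 := by
  rw [stereoPoint_last, div_eq_one_iff_eq h.ne', ← sub_eq_zero]
  constructor <;> intro h' <;> nlinarith [sq_nonneg a]

lemma inv_smul_eq_of_stereoPoint_eq {a b : ℝ} {v w : Fin m → ℝ} (ha : 0 < a) (hb : 0 < b)
    (h : stereoPoint a v = stereoPoint b w) : a⁻¹ • v = b⁻¹ • w := by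
  have hDv : 0 < ∑ j, v j ^ 2 + a ^ 2 := by positivity
  have hDw : 0 < ∑ j, w j ^ 2 + b ^ 2 := by positivity
  have hlast := congrArg (· (Fin.last m)) h
  simp only [stereoPoint_last] at hlast
  rw [div_eq_div_iff hDv.ne' hDw.ne'] at hlast
  have hsq : a ^ 2 * (∑ j, w j ^ 2 + b ^ 2) = b ^ 2 * (∑ j, v j ^ 2 + a ^ 2) := by
    linear_combination -hlast / 2
  funext i
  have hi := congrArg (· i.castSucc) h
  simp only [stereoPoint_castSucc] at hi
  rw [div_eq_div_iff hDv.ne' hDw.ne'] at hi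
  simp only [Pi.smul_apply, smul_eq_mul]
  field_simp
  refine mul_left_cancel₀ (mul_pos hb hDv).ne' ?_
  linear_combination (a * hi - 2 * v i * hsq) / 2

end Stereographic

lemma sum_sq_add_one_sub_norm_sq_pos {ι : Type*} [Fintype ι] (v : ι → ℝ) :
    0 < ∑ j, v j ^ 2 + (1 - ‖v‖) ^ 2 := by
  rcases eq_or_ne v 0 with rfl | hv
  · simp
  obtain ⟨j, hj⟩ := Function.ne_iff.1 hv
  have := Finset.single_le_sum (fun j _ => sq_nonneg (v j)) (Finset.mem_univ j)
  linarith [sq_pos_of_ne_zero hj, sq_nonneg (1 - ‖v‖)]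

namespace Cube

variable {n : ℕ}

lemma toSphere_denom_pos (y : I^ Fin (n + 1)) :
    0 < ∑ j, toCentered y j ^ 2 + (1 - supRadius y) ^ 2 :=
  sum_sq_add_one_sub_norm_sq_pos _

/-- Collapses `∂I^{n+1}` to the north pole; in centered coordinates `v` the open cube is first
mapped onto `ℝ^{n+1}` by `v ↦ (1 - ‖v‖)⁻¹ • v`. -/
def toSphere : C(I^ Fin (n + 1), unitSphere (n + 1)) where
  toFun y := ⟨stereoPoint (1 - supRadius y) (toCentered y),
    mem_sphere_zero_iff_norm.2 (norm_stereoPoint (toSphere_denom_pos y))⟩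
  continuous_toFun := by
    have hD (y : I^ Fin (n + 1)) := (toSphere_denom_pos y).ne'
    refine ((PiLp.continuous_toLp 2 _).comp (Continuous.finSnoc ?_ ?_)).subtype_mk _
    · exact continuous_pi fun i => (by fun_prop : Continuous _).div (by fun_prop) hD
    · exact (by fun_prop : Continuous _).div (by fun_prop) hD

@[simp] lemma coe_toSphere (y : I^ Fin (n + 1)) :
    (toSphere y : EuclideanSpace ℝ (Fin (n + 1 + 1))) =
      stereoPoint (1 - supRadius y) (toCentered y) := rfl

def northPole : unitSphere (n + 1) :=
  ⟨EuclideanSpace.single (Fin.last _) 1, by simp⟩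

lemma toSphere_of_mem_boundary {y : I^ Fin (n + 1)} (hy : y ∈ boundary _) :
    toSphere y = northPole := by
  have hr : supRadius y = 1 := supRadius_eq_one_iff.2 hy
  have hv : toCentered y ≠ 0 := fun h => by simp [supRadius, h] at hr
  exact Subtype.ext (by rw [coe_toSphere, hr, sub_self, stereoPoint_zero_left hv]; rfl)

lemma toSphere_last_eq_one_iff {y : I^ Fin (n + 1)} :
    (toSphere y : EuclideanSpace ℝ (Fin (n + 1 + 1))) (Fin.last _) = 1 ↔ y ∈ boundary _ := by
  rw [coe_toSphere, stereoPoint_last_eq_one_iff (toSphere_denom_pos y), sub_eq_zero, eq_comm,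
    supRadius_eq_one_iff]

lemma eq_or_mem_boundary_of_toSphere_eq {a b : I^ Fin (n + 1)} (h : toSphere a = toSphere b) :
    a = b ∨ a ∈ boundary _ ∧ b ∈ boundary _ := by
  have hab : a ∈ boundary _ ↔ b ∈ boundary _ := by
    rw [← toSphere_last_eq_one_iff, ← toSphere_last_eq_one_iff, h]
  by_cases ha : a ∈ boundary _
  · exact Or.inr ⟨ha, hab.1 ha⟩
  left
  have ra : 0 < 1 - supRadius a :=
    sub_pos.2 ((supRadius_le_one a).lt_of_ne (mt supRadius_eq_one_iff.1 ha))
  have rb : 0 < 1 - supRadius b :=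
    sub_pos.2 ((supRadius_le_one b).lt_of_ne (mt supRadius_eq_one_iff.1 (mt hab.2 ha)))
  have hv := inv_smul_eq_of_stereoPoint_eq ra rb (by simpa using congrArg Subtype.val h)
  have hr : supRadius a = supRadius b := by
    have := congrArg norm hv
    rw [norm_smul, norm_smul, norm_inv, norm_inv, Real.norm_of_nonneg ra.le,
      Real.norm_of_nonneg rb.le] at this
    change (1 - supRadius a)⁻¹ * supRadius a = (1 - supRadius b)⁻¹ * supRadius b at this
    field_simp at this
    linarith
  rw [hr] at hv
  rw [← ofCentered_toCentered a, ← ofCentered_toCentered b,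
    smul_right_injective _ (inv_ne_zero rb.ne') hv]

lemma toSphere_surjective : Function.Surjective (toSphere (n := n)) := by
  rintro ⟨z, hz⟩
  rw [mem_sphere_zero_iff_norm] at hz
  by_cases hc : z (Fin.last _) = 1
  · have hN : ‖z - EuclideanSpace.single (Fin.last _) 1‖ ^ 2 = 0 := by
      rw [norm_sub_sq_real, hz, EuclideanSpace.inner_single_right, hc]
      norm_num
    refine ⟨fun _ => 0, (toSphere_of_mem_boundary ⟨0, Or.inl rfl⟩).trans (Subtype.ext ?_)⟩
    exact (sub_eq_zero.1 (norm_eq_zero.1 (pow_eq_zero_iff two_ne_zero |>.1 hN))).symm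
  set w : Fin (n + 1) → ℝ := fun i => z i.castSucc
  have hc1 : 0 < 1 - z (Fin.last _) := by
    have := (le_abs_self _).trans ((PiLp.norm_apply_le z (Fin.last _)).trans hz.le)
    exact sub_pos.2 (this.lt_of_ne hc)
  set k := (1 - z (Fin.last _) + ‖w‖)⁻¹
  have hk : 0 < k := by positivity
  have hk₁ : k * (1 - z (Fin.last _) + ‖w‖) = 1 := inv_mul_cancel₀ (by positivity)
  have hkw : ‖k • w‖ = k * ‖w‖ := by rw [norm_smul, Real.norm_of_nonneg hk.le]
  refine ⟨ofCentered (k • w), Subtype.ext ?_⟩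
  rw [coe_toSphere, supRadius, toCentered_ofCentered (hkw.trans_le ?_), hkw,
    show 1 - k * ‖w‖ = k * (1 - z (Fin.last _)) by linear_combination -hk₁,
    stereoPoint_smul hk.ne', stereoPoint_one_sub_last hz hc]
  nlinarith

lemma exists_comp_toSphere_eq (q : C(I^ Fin (n + 1), X))
    (hq : ∀ y ∈ boundary _, ∀ z ∈ boundary _, q y = q z) :
    ∃ q' : C(unitSphere (n + 1), X), q'.comp toSphere = q :=
  have hquot := IsQuotientMap.of_surjective_continuous toSphere_surjective toSphere.continuous
  have hfac : Function.FactorsThrough q toSphere := fun a b h =>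
    (eq_or_mem_boundary_of_toSphere_eq h).elim (congrArg q) fun hab => hq a hab.1 b hab.2
  ⟨hquot.lift q hfac, hquot.lift_comp q hfac⟩

lemma homotopic_of_homotopy_comp_toSphere {f₀ f₁ : C(unitSphere (n + 1), X)}
    (H : Homotopy (f₀.comp toSphere) (f₁.comp toSphere)) (hH : H.ConstOnBoundary) :
    f₀.Homotopic f₁ := by
  let π : C(I × I^ Fin (n + 1), I × unitSphere (n + 1)) := (ContinuousMap.id I).prodMap toSphere
  have hquot := IsQuotientMap.of_surjective_continuous
    (Function.surjective_id.prodMap toSphere_surjective) π.continuous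
  have hfac : Function.FactorsThrough H.toContinuousMap π := by
    rintro ⟨s, a⟩ ⟨t, b⟩ h
    obtain rfl : s = t := congrArg Prod.fst h
    have hab : toSphere a = toSphere b := congrArg Prod.snd h
    exact (eq_or_mem_boundary_of_toSphere_eq hab).elim (fun hab => by rw [hab]) fun hab =>
      hH s a hab.1 b hab.2
  have hK (t : I) (y : I^ Fin (n + 1)) : hquot.lift _ hfac (t, toSphere y) = H (t, y) :=
    DFunLike.congr_fun (hquot.lift_comp _ hfac) (t, y)
  refine ⟨{ toContinuousMap := hquot.lift _ hfac, map_zero_left := ?_, map_one_left := ?_ }⟩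
  all_goals intro z; obtain ⟨y, rfl⟩ := toSphere_surjective z
  exacts [(hK 0 y).trans (H.apply_zero y), (hK 1 y).trans (H.apply_one y)]

end Cube

section SpanierGroup

variable {n : ℕ} {𝒰 : Set (Set X)} {x₀ : X}

theorem genLoop_homotopic_const_of_freelySmall
    (h𝒰 : ∀ U ∈ 𝒰, ∀ f : C(unitSphere (n + 1), X), range f ⊆ U →
      ∃ c, f.Homotopic (ContinuousMap.const _ c))
    {p : GenLoop (Fin (n + 1)) X x₀} (hp : FreelySmall 𝒰 p.1) :
    GenLoop.Homotopic p GenLoop.const := by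
  obtain ⟨q, U, H, hU, hqU, hH⟩ := hp
  obtain ⟨q', rfl⟩ := Cube.exists_comp_toSphere_eq q fun y hy z hz => by
    simpa using hH 1 y hy z hz
  obtain ⟨c, ⟨K⟩⟩ := h𝒰 U hU q' (by rwa [coe_comp, Cube.toSphere_surjective.range_comp] at hqU)
  have hK : (K.compContinuousMap Cube.toSphere).ConstOnBoundary := fun t y hy z hz => by
    simp [Cube.toSphere_of_mem_boundary hy, Cube.toSphere_of_mem_boundary hz]
  exact Cube.genLoop_homotopic_const_of_constOnBoundary
    (H.trans ((K.compContinuousMap _).cast rfl (const_comp _ _)))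
    (Homotopy.ConstOnBoundary.trans (F := H) hH hK)

theorem homotopic_const_of_spanierGroup_eq_bot [PathConnectedSpace X]
    (hbot : spanierGroup n 𝒰 x₀ = ⊥) {U : Set X} (hU : U ∈ 𝒰)
    (f : C(unitSphere (n + 1), X)) (hf : range f ⊆ U) :
    ∃ c, f.Homotopic (ContinuousMap.const _ c) := by
  obtain ⟨p, H, hH⟩ := Cube.exists_genLoop_homotopy_constOnBoundary (f.comp Cube.toSphere)
    (fun y hy => congrArg f (Cube.toSphere_of_mem_boundary hy))
    (PathConnectedSpace.somePath x₀ (f Cube.northPole))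
  have hp : FreelySmall 𝒰 p.1 :=
    ⟨_, U, H.symm, hU, (range_comp_subset_range Cube.toSphere f).trans hf, hH.symm⟩
  have hmem : (⟦p⟧ : HomotopyGroup (Fin (n + 1)) X x₀) ∈ spanierGroup n 𝒰 x₀ :=
    Subgroup.subset_closure ⟨p, hp, rfl⟩
  rw [hbot] at hmem
  obtain ⟨G⟩ := Quotient.exact
    (((Subgroup.mem_bot (G := π_ (n + 1) X x₀)).1 hmem).trans HomotopyGroup.one_def)
  exact ⟨x₀, Cube.homotopic_of_homotopy_comp_toSphere
    ((H.trans G.toHomotopy).cast rfl (const_comp _ _).symm) (hH.trans G.constOnBoundary)⟩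

end SpanierGroup

/-- A path-connected space is semilocally `π_{n+1}`-trivial iff some open cover has
trivial `(n+1)`-st Spanier group. -/
theorem semilocallyPiTrivial_iff_spanierGroup_bot (n : ℕ) [PathConnectedSpace X] (x₀ : X) :
    SemilocallyPiTrivial (n + 1) X ↔
      ∃ 𝒰 : Set (Set X), IsOpenCover 𝒰 ∧ spanierGroup n 𝒰 x₀ = ⊥ := by
  constructor
  · intro h
    let 𝒰 : Set (Set X) := {U | IsOpen U ∧ ∀ f : C(unitSphere (n + 1), X), range f ⊆ U →
      ∃ c, f.Homotopic (ContinuousMap.const _ c)}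
    refine ⟨𝒰, ⟨fun U hU => hU.1, eq_univ_of_forall fun x => ?_⟩, ?_⟩
    · obtain ⟨U, hUo, hxU, hU⟩ := h x
      exact mem_sUnion.2 ⟨U, ⟨hUo, hU⟩, hxU⟩
    · refine le_bot_iff.1 ((Subgroup.closure_le _).2 ?_)
      rintro _ ⟨p, hp, rfl⟩
      exact (Subgroup.mem_bot (G := π_ (n + 1) X x₀)).2 ((Quotient.sound
        (genLoop_homotopic_const_of_freelySmall (fun U hU => hU.2) hp)).trans
          HomotopyGroup.one_def.symm)
  · rintro ⟨𝒰, ⟨h𝒰, hcover⟩, hbot⟩ x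
    obtain ⟨U, hU, hxU⟩ := mem_sUnion.1 (hcover.symm ▸ mem_univ x)
    exact ⟨U, h𝒰 U hU, hxU, homotopic_const_of_spanierGroup_eq_bot hbot hU⟩
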